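/- arXiv:2011.04468 — 3 statements merged into one kernel-verified Lean document; each statement's English description precedes it below -/
import Mathlib

section
/- The max-plus equation A ⊞ x = b has a solution x ∈ ℝ_max^n if and only if the principal solution x̂ = (-A)ᵀ ⊞' b satisfies A ⊞ x̂ = b. -/
/-!
The map `x ↦ A ⊞ x` is residuated: `A ⊞ x ≤ b` holds exactly when `x ≤ x̂`, because
`a_{ik} + x_k ≤ b_i` for all `i` means `x_k ≤ min_i (b_i - a_{ik})`. In particular `A ⊞ x̂ ≤ b`,
and if `A ⊞ x = b` then `x ≤ x̂`, so monotonicity gives `b = A ⊞ x ≤ A ⊞ x̂ ≤ b`.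
-/

/-- Max-plus matrix-vector product over ℝ_max = WithBot ℝ. -/
noncomputable def maxPlus {m n : ℕ} (A : Fin m → Fin n → ℝ) (x : Fin n → WithBot ℝ)
    (i : Fin m) : WithBot ℝ :=
  Finset.univ.sup fun k => (A i k : WithBot ℝ) + x k

/-- The principal solution `x̂_j = min_i (b_i - a_{ij})`. -/
noncomputable def principalSol {m n : ℕ} (A : Fin (m + 1) → Fin n → ℝ)
    (b : Fin (m + 1) → ℝ) (j : Fin n) : ℝ :=
  Finset.univ.inf' Finset.univ_nonempty fun i => b i - A i j

theorem WithBot.coe_add_le_coe_iff_le_coe_sub {α : Type*} [AddCommGroup α] [LinearOrder α]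
    [IsOrderedAddMonoid α] {a b : α} {y : WithBot α} :
    (a : WithBot α) + y ≤ b ↔ y ≤ ((b - a : α) : WithBot α) := by
  induction y with
  | bot => simp
  | coe r => norm_cast; exact le_sub_iff_add_le'.symm

theorem maxPlus_mono {m n : ℕ} (A : Fin m → Fin n → ℝ) : Monotone (maxPlus A) :=
  fun _ _ hxy _ => Finset.sup_mono_fun fun k _ => add_le_add le_rfl (hxy k)

theorem le_principalSol_iff {m n : ℕ} {A : Fin (m + 1) → Fin n → ℝ} {b : Fin (m + 1) → ℝ}
    {j : Fin n} {y : WithBot ℝ} :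
    y ≤ (principalSol A b j : WithBot ℝ) ↔ ∀ i, y ≤ ((b i - A i j : ℝ) : WithBot ℝ) := by
  induction y with
  | bot => simp
  | coe r =>
    simp only [WithBot.coe_le_coe, principalSol, Finset.le_inf'_iff, Finset.mem_univ,
      true_imp_iff]

theorem maxPlus_le_iff_le_principalSol {m n : ℕ} (A : Fin (m + 1) → Fin n → ℝ)
    (b : Fin (m + 1) → ℝ) (x : Fin n → WithBot ℝ) :
    maxPlus A x ≤ (fun i => (b i : WithBot ℝ)) ↔
      x ≤ fun j => (principalSol A b j : WithBot ℝ) := by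
  simp only [Pi.le_def, maxPlus, Finset.sup_le_iff, Finset.mem_univ, true_imp_iff,
    WithBot.coe_add_le_coe_iff_le_coe_sub, le_principalSol_iff]
  exact forall_comm

/--  has a solution iff the principal solution satisfies it. -/
theorem exists_solution_iff_principal (m n : ℕ) (A : Fin (m + 1) → Fin (n + 1) → ℝ)
    (b : Fin (m + 1) → ℝ) :
    (∃ x : Fin (n + 1) → WithBot ℝ, ∀ i, maxPlus A x i = (b i : WithBot ℝ)) ↔
      (∀ i, maxPlus A (fun j => ((principalSol A b j : ℝ) : WithBot ℝ)) i = (b i : WithBot ℝ)) := by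
  refine ⟨fun ⟨x, hx⟩ i => le_antisymm ?_ ?_, fun h => ⟨_, h⟩⟩
  · exact (maxPlus_le_iff_le_principalSol A b _).mpr le_rfl i
  · have hx_le : x ≤ fun j => (principalSol A b j : WithBot ℝ) :=
      (maxPlus_le_iff_le_principalSol A b x).mp fun i => (hx i).le
    exact hx i ▸ maxPlus_mono A hx_le i
end

section
/- (Supermodularity of E_p) For any p ≥ 1, the error function E_p(T) = Σ_{i=1}^m (b_i - max_{j∈T}(a_{ij} + x̂_j))^p is supermodular on nonempty subsets of {1,…,n}: for all nonempty C ⊆ B ⊆ {1,…,n} and k ∉ B, E_p(C ∪ {k}) - E_p(C) ≤ E_p(B ∪ {k}) - E_p(B). -/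
/-- The ℓ_p error function `E_p`. -/
noncomputable def Ep {m n : ℕ} (A : Fin (m + 1) → Fin (n + 1) → ℝ) (b : Fin (m + 1) → ℝ)
    (p : ℝ) (T : Finset (Fin (n + 1))) (hT : T.Nonempty) : ℝ :=
  ∑ i, (b i - T.sup' hT fun j => A i j + principalSol A b j) ^ p

/-! Row by row, adding `k` to `T` replaces the residual
`r_T = b_i - max_{j ∈ T} (a_{ij} + x̂_j) ≥ 0` by `min t r_T` with `t = b_i - a_{ik} - x̂_k ≥ 0`,
and `r_B ≤ r_C` when `C ⊆ B`. Supermodularity thus reduces to the monotonicity of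
`r ↦ φ r - φ (min t r)` on `[0, ∞)` for monotone `φ`, here `φ r = r ^ p`. -/

open Finset

theorem MonotoneOn.apply_min_sub_apply_le_of_le {α β : Type*} [LinearOrder α] [AddCommGroup β]
    [PartialOrder β] [IsOrderedAddMonoid β] {f : α → β} {s : Set α} (hf : MonotoneOn f s)
    {t x y : α} (ht : t ∈ s) (hx : x ∈ s) (hy : y ∈ s) (hyx : y ≤ x) :
    f (min t x) - f x ≤ f (min t y) - f y := by
  rcases le_total t y with hty | hyt
  · rw [min_eq_left hty, min_eq_left (hty.trans hyx)]
    exact sub_le_sub_left (hf hy hx hyx) _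
  · rw [min_eq_right hyt, sub_self, sub_nonpos]
    exact hf (min_rec' (· ∈ s) ht hx) hx (min_le_right t x)

theorem MonotoneOn.apply_sub_sup'_insert_supermodular {ι α β : Type*} [DecidableEq ι]
    [AddCommGroup α] [LinearOrder α] [IsOrderedAddMonoid α] [AddCommGroup β] [PartialOrder β]
    [IsOrderedAddMonoid β] {f : α → β} (hf : MonotoneOn f (Set.Ici 0)) {g : ι → α} {c : α}
    (hg : ∀ j, g j ≤ c) {C B : Finset ι} (hC : C.Nonempty) (hCB : C ⊆ B) (k : ι) :
    f (c - (insert k C).sup' (insert_nonempty k C) g) - f (c - C.sup' hC g)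
      ≤ f (c - (insert k B).sup' (insert_nonempty k B) g) - f (c - B.sup' (hC.mono hCB) g) := by
  have residual_nonneg : ∀ {T : Finset ι} (hT : T.Nonempty), 0 ≤ c - T.sup' hT g :=
    fun hT => sub_nonneg.2 (sup'_le hT g fun j _ => hg j)
  rw [sup'_insert, sup'_insert, sub_sup, sub_sup]
  exact hf.apply_min_sub_apply_le_of_le (sub_nonneg.2 (hg k)) (residual_nonneg hC)
    (residual_nonneg _) (sub_le_sub_left (sup'_mono g hCB hC) c)

theorem add_principalSol_le {m n : ℕ} (A : Fin (m + 1) → Fin n → ℝ) (b : Fin (m + 1) → ℝ)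
    (i : Fin (m + 1)) (j : Fin n) : A i j + principalSol A b j ≤ b i := by
  have := inf'_le (fun i' => b i' - A i' j) (mem_univ i)
  rw [principalSol]
  linarith

theorem Ep_supermodular_general (m n : ℕ) (A : Fin (m + 1) → Fin (n + 1) → ℝ)
    (b : Fin (m + 1) → ℝ) (p : ℝ) (hp : 1 ≤ p)
    (C B : Finset (Fin (n + 1))) (hC : C.Nonempty) (hCB : C ⊆ B)
    (k : Fin (n + 1)) :
    Ep A b p (insert k C) (Finset.insert_nonempty k C) - Ep A b p C hC
      ≤ Ep A b p (insert k B) (Finset.insert_nonempty k B) - Ep A b p B (hC.mono hCB) := by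
  rw [Ep, Ep, Ep, Ep, ← sum_sub_distrib, ← sum_sub_distrib]
  have rpow_mono := Real.monotoneOn_rpow_Ici_of_exponent_nonneg (zero_le_one.trans hp)
  exact sum_le_sum fun i _ =>
    rpow_mono.apply_sub_sup'_insert_supermodular (add_principalSol_le A b i) hC hCB k

/-- Supermodularity of `E_p` on nonempty subsets. -/
theorem Ep_supermodular (m n : ℕ) (A : Fin (m + 1) → Fin (n + 1) → ℝ)
    (b : Fin (m + 1) → ℝ) (p : ℝ) (hp : 1 ≤ p)
    (C B : Finset (Fin (n + 1))) (hC : C.Nonempty) (hCB : C ⊆ B)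
    (k : Fin (n + 1)) (hk : k ∉ B) :
    Ep A b p (insert k C) (Finset.insert_nonempty k C) - Ep A b p C hC
      ≤ Ep A b p (insert k B) (Finset.insert_nonempty k B) - Ep A b p B (hC.mono hCB) :=
  Ep_supermodular_general m n A b p hp C B hC hCB k
end

section
/- Scalar key lemma for supermodularity of E_p: for real numbers u ≤ v ≤ w and exponent p ≥ 1, and any real c ≥ w, we have (c - u)^p - (c - max(u, s))^p ≥ (c - v)^p - (c - max(v, s))^p for every real s ≤ c. (Adding a new element decreases the p-th power residual at least as much when the current max is smaller.) -/
/-- Scalar key lemma for the supermodularity of `E_p`: adding a new element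
decreases the p-th power residual at least as much when the current max is smaller. -/
theorem scalar_supermodular_key (u v w c s p : ℝ)
    (huv : u ≤ v) (hvw : v ≤ w) (hwc : w ≤ c) (hsc : s ≤ c) (hp : 1 ≤ p) :
    (c - v) ^ p - (c - max v s) ^ p ≤ (c - u) ^ p - (c - max u s) ^ p := by
  have hp0 : 0 ≤ p := le_trans zero_le_one hp
  rcases le_total s u with hsu | hus
  · rw [max_eq_left hsu, max_eq_left (hsu.trans huv)]
    simp
  · rcases le_total s v with hsv | hvs
    · rw [max_eq_right hus, max_eq_left hsv]
      simp only [sub_self]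
      have : (c - s) ^ p ≤ (c - u) ^ p :=
        Real.rpow_le_rpow (by linarith) (by linarith) hp0
      linarith
    · rw [max_eq_right hus, max_eq_right hvs]
      have : (c - v) ^ p ≤ (c - u) ^ p :=
        Real.rpow_le_rpow (by linarith) (by linarith) hp0
      linarith
end
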